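/- For v ∈ H¹(K;ℝ²) on a bounded domain K ⊂ ℝ², the modified strain energy satisfies ‖ε*(v)‖²_{L²(K)} = ‖∇v‖²_{L²(K)} - ½‖Π₀ rot v‖²_{L²(K)} ≥ ½‖∇v‖²_{L²(K)}, so that ‖∇v‖_{L²(K)} ≤ √2 ‖ε*(v)‖_{L²(K)}. -/

import Mathlib

/-! With `c = Π₀ rot v`, pointwise `|∇v - (c/2)𝒳|² = |∇v|² - c rot v + c²/2`. Since `c` is the mean
of `rot v` over `K`, `∫_K c rot v = ∫_K c²`, which gives the identity. The bound combines
`∫_K c² ≤ ∫_K (rot v)²` (the variance `∫_K (rot v - c)²` is nonnegative) with the pointwise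
`(rot v)² ≤ 2|∇v|²`. -/

open MeasureTheory Real

noncomputable def grad2 (u : (Fin 2 → ℝ) → (Fin 2 → ℝ)) (x : Fin 2 → ℝ) :
    Matrix (Fin 2) (Fin 2) ℝ :=
  fun i j => fderiv ℝ u x (Pi.single j 1) i

noncomputable def rot2 (u : (Fin 2 → ℝ) → (Fin 2 → ℝ)) (x : Fin 2 → ℝ) : ℝ :=
  grad2 u x 1 0 - grad2 u x 0 1

def Xmat : Matrix (Fin 2) (Fin 2) ℝ := !![0, -1; 1, 0]

def frob (A B : Matrix (Fin 2) (Fin 2) ℝ) : ℝ := ∑ i, ∑ j, A i j * B i j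

noncomputable def Pi0 (K : Set (Fin 2 → ℝ)) (f : (Fin 2 → ℝ) → ℝ) : ℝ :=
  (∫ x in K, f x) / (volume K).toReal

noncomputable def epsStar (K : Set (Fin 2 → ℝ)) (v : (Fin 2 → ℝ) → (Fin 2 → ℝ))
    (x : Fin 2 → ℝ) : Matrix (Fin 2) (Fin 2) ℝ :=
  grad2 v x - (Pi0 K (rot2 v) / 2) • Xmat

theorem frob_sub_smul_Xmat (A : Matrix (Fin 2) (Fin 2) ℝ) (t : ℝ) :
    frob (A - t • Xmat) (A - t • Xmat) = frob A A - 2 * t * (A 1 0 - A 0 1) + 2 * t ^ 2 := by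
  simp only [frob, Xmat, Fin.sum_univ_two, Matrix.sub_apply, Matrix.smul_apply, smul_eq_mul,
    Matrix.of_apply, Matrix.cons_val', Matrix.cons_val_zero, Matrix.cons_val_one,
    Matrix.empty_val', Matrix.cons_val_fin_one]
  ring

theorem sq_sub_le_two_mul_frob (A : Matrix (Fin 2) (Fin 2) ℝ) :
    (A 1 0 - A 0 1) ^ 2 ≤ 2 * frob A A := by
  simp only [frob, Fin.sum_univ_two]
  nlinarith [sq_nonneg (A 1 0 + A 0 1), sq_nonneg (A 0 0), sq_nonneg (A 1 1)]

theorem Pi0_eq_setAverage (K : Set (Fin 2 → ℝ)) (f : (Fin 2 → ℝ) → ℝ) :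
    Pi0 K f = ⨍ x in K, f x := by
  rw [setAverage_eq, smul_eq_mul, inv_mul_eq_div]
  rfl

section Average

variable {α : Type*} [MeasurableSpace α] {μ : Measure α} [IsFiniteMeasure μ] {f : α → ℝ}

theorem integral_average_mul :
    ∫ x, (⨍ a, f a ∂μ) * f x ∂μ = ∫ _, (⨍ a, f a ∂μ) ^ 2 ∂μ := by
  rw [integral_const_mul, ← integral_average μ f, ← integral_const_mul, sq]

theorem integral_sq_average_le (hf : Integrable f μ) (hf2 : Integrable (fun x => f x ^ 2) μ) :
    ∫ _, (⨍ a, f a ∂μ) ^ 2 ∂μ ≤ ∫ x, f x ^ 2 ∂μ := by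
  set c := ⨍ a, f a ∂μ
  have hcf : Integrable (fun x => 2 * c * f x) μ := hf.const_mul _
  have hvar : ∫ x, (f x - c) ^ 2 ∂μ = ∫ x, f x ^ 2 ∂μ - ∫ _, c ^ 2 ∂μ := by
    calc ∫ x, (f x - c) ^ 2 ∂μ = ∫ x, (f x ^ 2 - 2 * c * f x + c ^ 2) ∂μ := by
          congr 1; ext x; ring
      _ = ∫ x, f x ^ 2 ∂μ - 2 * ∫ x, c * f x ∂μ + ∫ _, c ^ 2 ∂μ := by
          have hsub : Integrable (fun x => f x ^ 2 - 2 * c * f x) μ := hf2.sub hcf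
          rw [integral_add hsub (integrable_const _), integral_sub hf2 hcf,
            integral_const_mul, integral_const_mul, mul_assoc]
      _ = ∫ x, f x ^ 2 ∂μ - ∫ _, c ^ 2 ∂μ := by
          rw [integral_average_mul]; ring
  have hnonneg : 0 ≤ ∫ x, (f x - c) ^ 2 ∂μ := integral_nonneg fun x => by positivity
  linarith

end Average

theorem stmt4_general (K : Set (Fin 2 → ℝ))
    (htop : volume K ≠ ⊤)
    (v : (Fin 2 → ℝ) → (Fin 2 → ℝ))
    (hrv : IntegrableOn (rot2 v) K)
    (hrv2 : IntegrableOn (fun x => (rot2 v x) ^ 2) K)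
    (hgg : IntegrableOn (fun x => frob (grad2 v x) (grad2 v x)) K) :
    (∫ x in K, frob (epsStar K v x) (epsStar K v x)
      = (∫ x in K, frob (grad2 v x) (grad2 v x))
        - (1 / 2) * ∫ x in K, (Pi0 K (rot2 v)) ^ 2)
    ∧ (1 / 2) * (∫ x in K, (Pi0 K (rot2 v)) ^ 2)
        ≤ ∫ x in K, frob (grad2 v x) (grad2 v x) := by
  have : IsFiniteMeasure (volume.restrict K) := isFiniteMeasure_restrict.mpr htop
  have hc : Pi0 K (rot2 v) = ⨍ x in K, rot2 v x := Pi0_eq_setAverage K _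
  set c := Pi0 K (rot2 v)
  have hcross : ∫ x in K, c * rot2 v x = ∫ _ in K, c ^ 2 := by
    rw [hc]; exact integral_average_mul
  have hcrot : IntegrableOn (fun x => c * rot2 v x) K := hrv.const_mul c
  constructor
  · calc ∫ x in K, frob (epsStar K v x) (epsStar K v x)
        = ∫ x in K, (frob (grad2 v x) (grad2 v x) - c * rot2 v x + c ^ 2 / 2) := by
          congr 1; ext x
          rw [epsStar, frob_sub_smul_Xmat, rot2]; ring
      _ = (∫ x in K, frob (grad2 v x) (grad2 v x)) - (∫ x in K, c * rot2 v x)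
            + ∫ _ in K, c ^ 2 / 2 := by
          have hsub : IntegrableOn (fun x => frob (grad2 v x) (grad2 v x) - c * rot2 v x) K :=
            hgg.sub hcrot
          rw [integral_add hsub (integrable_const _), integral_sub hgg hcrot]
      _ = _ := by
          rw [hcross, integral_div]; ring
  · calc (1 / 2) * ∫ _ in K, c ^ 2
        ≤ (1 / 2) * ∫ x in K, rot2 v x ^ 2 := by
          refine mul_le_mul_of_nonneg_left ?_ (by norm_num)
          rw [hc]; exact integral_sq_average_le hrv hrv2
      _ ≤ ∫ x in K, frob (grad2 v x) (grad2 v x) := by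
          rw [← integral_const_mul]
          refine integral_mono (hrv2.const_mul _) hgg fun x => ?_
          linarith [show rot2 v x ^ 2 ≤ _ from sq_sub_le_two_mul_frob (grad2 v x)]

/-- ‖ε*(v)‖² = ‖∇v‖² - ½‖Π₀ rot v‖², together with ½‖Π₀ rot v‖² ≤ ‖∇v‖². -/
theorem stmt4 (K : Set (Fin 2 → ℝ)) (hK : MeasurableSet K)
    (h0 : volume K ≠ 0) (htop : volume K ≠ ⊤)
    (v : (Fin 2 → ℝ) → (Fin 2 → ℝ))
    (hv : ∀ x ∈ K, DifferentiableAt ℝ v x)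
    (hrv : IntegrableOn (rot2 v) K)
    (hrv2 : IntegrableOn (fun x => (rot2 v x) ^ 2) K)
    (hgg : IntegrableOn (fun x => frob (grad2 v x) (grad2 v x)) K) :
    (∫ x in K, frob (epsStar K v x) (epsStar K v x)
      = (∫ x in K, frob (grad2 v x) (grad2 v x))
        - (1 / 2) * ∫ x in K, (Pi0 K (rot2 v)) ^ 2)
    ∧ (1 / 2) * (∫ x in K, (Pi0 K (rot2 v)) ^ 2)
        ≤ ∫ x in K, frob (grad2 v x) (grad2 v x) :=
  stmt4_general K htop v hrv hrv2 hgg
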